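/- arXiv:2605.31372 — 7 statements merged into one kernel-verified Lean document; each statement's English description precedes it below -/
import Mathlib

section
/- Let P be a hyperbolic-valued probability distribution on n ≥ 2 points and let U = U_n^{s(P)} be the uniform distribution with the same total mass, i.e., U_j⁽ˡ⁾ = s⁽ˡ⁾(P)/n. Then |‖P‖²_𝔻 − s⁽¹⁾(P)s⁽²⁾(P)/n| ≤ d_𝔻(P,U)² ≤ ‖P‖²_𝔻 + 3 s⁽¹⁾(P)s⁽²⁾(P)/n, where d_𝔻(P,U)² = ∑_j |(p_j⁽¹⁾ − s⁽¹⁾(P)/n)(p_j⁽²⁾ − s⁽²⁾(P)/n)| and ‖P‖²_𝔻 = ∑_j p_j⁽¹⁾ p_j⁽²⁾. -/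
/-- Hyperbolic numbers in idempotent coordinates. -/
noncomputable abbrev HypD : Type := ℝ × ℝ

theorem stmt_7 (n : ℕ) (hn : 2 ≤ n) (P : Fin n → HypD) (s1 s2 : ℝ)
    (hrange : ∀ j, 0 ≤ (P j).1 ∧ (P j).1 ≤ 1 ∧ 0 ≤ (P j).2 ∧ (P j).2 ≤ 1)
    (hs1 : s1 = 0 ∨ s1 = 1) (hs2 : s2 = 0 ∨ s2 = 1) (hact : s1 = 1 ∨ s2 = 1)
    (hsum1 : ∑ j, (P j).1 = s1) (hsum2 : ∑ j, (P j).2 = s2) :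
    |(∑ j, (P j).1 * (P j).2) - s1 * s2 / n|
      ≤ ∑ j, |((P j).1 - s1 / n) * ((P j).2 - s2 / n)| ∧
    ∑ j, |((P j).1 - s1 / n) * ((P j).2 - s2 / n)|
      ≤ (∑ j, (P j).1 * (P j).2) + 3 * (s1 * s2) / n := by
  have hn0 : (n : ℝ) ≠ 0 := by
    have : (0:ℝ) < n := by exact_mod_cast Nat.lt_of_lt_of_le (by norm_num) hn
    linarith
  have hs1n : 0 ≤ s1 := by rcases hs1 with h | h <;> simp [h]
  have hs2n : 0 ≤ s2 := by rcases hs2 with h | h <;> simp [h]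
  have expand : ∀ j : Fin n, ((P j).1 - s1 / n) * ((P j).2 - s2 / n)
      = (P j).1 * (P j).2 - (s2 / n) * (P j).1 - (s1 / n) * (P j).2 + (s1 / n) * (s2 / n) := by
    intro j; ring
  have key : ∑ j, ((P j).1 - s1 / n) * ((P j).2 - s2 / n)
      = (∑ j, (P j).1 * (P j).2) - s1 * s2 / n := by
    simp only [expand, Finset.sum_add_distrib, Finset.sum_sub_distrib, ← Finset.mul_sum,
      hsum1, hsum2, Finset.sum_const, Finset.card_univ, Fintype.card_fin, nsmul_eq_mul]
    field_simp
    ring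
  constructor
  · rw [← key]
    exact Finset.abs_sum_le_sum_abs _ _
  · have bound : ∀ j : Fin n, |((P j).1 - s1 / n) * ((P j).2 - s2 / n)|
        ≤ (P j).1 * (P j).2 + ((s2 / n) * (P j).1 + (s1 / n) * (P j).2 + (s1 / n) * (s2 / n)) := by
      intro j
      obtain ⟨h1, h2, h3, h4⟩ := hrange j
      have ha : 0 ≤ s1 / n := by positivity
      have hb : 0 ≤ s2 / n := by positivity
      rw [expand j]
      have hx : 0 ≤ (P j).1 * (P j).2 + (s1 / n) * (s2 / n) := by positivity
      have hy : 0 ≤ (s2 / n) * (P j).1 + (s1 / n) * (P j).2 := by positivity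
      calc |(P j).1 * (P j).2 - (s2 / n) * (P j).1 - (s1 / n) * (P j).2 + (s1 / n) * (s2 / n)|
          = |((P j).1 * (P j).2 + (s1 / n) * (s2 / n)) - ((s2 / n) * (P j).1 + (s1 / n) * (P j).2)| := by
            ring_nf
        _ ≤ ((P j).1 * (P j).2 + (s1 / n) * (s2 / n)) + ((s2 / n) * (P j).1 + (s1 / n) * (P j).2) := by
            rw [abs_sub_le_iff]; constructor <;> linarith
        _ = (P j).1 * (P j).2 + ((s2 / n) * (P j).1 + (s1 / n) * (P j).2 + (s1 / n) * (s2 / n)) := by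
            ring
    calc ∑ j, |((P j).1 - s1 / n) * ((P j).2 - s2 / n)|
        ≤ ∑ j, ((P j).1 * (P j).2 + ((s2 / n) * (P j).1 + (s1 / n) * (P j).2 + (s1 / n) * (s2 / n))) :=
          Finset.sum_le_sum fun j _ => bound j
      _ = (∑ j, (P j).1 * (P j).2) + 3 * (s1 * s2) / n := by
          simp only [Finset.sum_add_distrib, ← Finset.mul_sum, hsum1, hsum2,
            Finset.sum_const, Finset.card_univ, Fintype.card_fin, nsmul_eq_mul]
          field_simp
          ring
end

section
/- If P and Q are hyperbolic-valued probability distributions with s(P) = s(Q) and P hyperbolically majorizes Q, then H_𝔻(P) ⪯ H_𝔻(Q) and G_𝔻(P) ⪯ G_𝔻(Q) in the hyperbolic partial order, where H_𝔻 applies Shannon entropy and G_𝔻 applies the Gini–Simpson entropy 1 − ∑ p_j² to each active idempotent component. -/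
/-- Sum of the `k` largest entries of a real vector, as the supremum of sums
over subsets of cardinality `k`. -/
noncomputable def topSum {n : ℕ} (x : Fin n → ℝ) (k : ℕ) : ℝ :=
  sSup ((fun A : Finset (Fin n) => ∑ i ∈ A, x i) '' {A | A.card = k})

/-- `x` majorizes `y`: partial sums of the decreasing rearrangement of `x`
dominate those of `y`, and the total sums agree. -/
def Majorizes {n : ℕ} (x y : Fin n → ℝ) : Prop :=
  (∀ k : ℕ, topSum y k ≤ topSum x k) ∧ ∑ i, x i = ∑ i, y i

/-!
Writing `(t - s)⁺ = t - min t s`, majorization of `y` by `x` with equal totals amounts to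
`∑ i, min (x i) s ≤ ∑ i, min (y i) s` for every level `s`. On `[0, M]` both entropies are,
up to a linear term that cancels because the totals agree, mixtures
`t ↦ ∫ s in 0..M, w s * min t s` with `w ≥ 0`: `w = 1` gives `M t - t² / 2` and `w s = s⁻¹`
gives `-t log t + t + t log M`. Integrating the level-wise inequality against `w` gives both
claims.
-/

open Finset Real

section TopSum

variable {n : ℕ}

theorem sum_le_topSum (x : Fin n → ℝ) (A : Finset (Fin n)) :
    ∑ i ∈ A, x i ≤ topSum x #A :=
  le_csSup ((Set.toFinite _).image _).bddAbove ⟨A, rfl, rfl⟩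

theorem topSum_le_sum_sub_sum_min (x : Fin n → ℝ) (c : ℝ) {k : ℕ} (hk : k ≤ n) :
    topSum x k ≤ ∑ i, x i - ∑ i, min (x i) c + k * c := by
  obtain ⟨B, -, hB⟩ := exists_subset_card_eq (s := (univ : Finset (Fin n))) (by simpa using hk)
  refine csSup_le ⟨_, B, hB, rfl⟩ ?_
  rintro _ ⟨A, hA : #A = k, rfl⟩
  have hmin : ∑ i ∈ A, min (x i) c ≤ k * c := by
    simpa [hA] using sum_le_sum fun i (_ : i ∈ A) => min_le_right (x i) c
  have hsub : ∑ i ∈ A, (x i - min (x i) c) ≤ ∑ i, (x i - min (x i) c) :=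
    sum_le_sum_of_subset_of_nonneg (subset_univ A) fun i _ _ => sub_nonneg.2 (min_le_left _ _)
  rw [sum_sub_distrib, sum_sub_distrib] at hsub
  linarith

theorem Majorizes.sum_min_le {x y : Fin n → ℝ} (h : Majorizes x y) (c : ℝ) :
    ∑ i, min (x i) c ≤ ∑ i, min (y i) c := by
  set A := univ.filter fun i => c ≤ y i
  have hy : ∑ i, min (y i) c = ∑ i, y i - ∑ i ∈ A, y i + #A * c := by
    rw [← sum_filter_add_sum_filter_not univ (fun i => c ≤ y i),
      ← sum_filter_add_sum_filter_not univ (fun i => c ≤ y i) y]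
    have hA : ∑ i ∈ A, min (y i) c = #A * c := by
      rw [sum_congr rfl fun i hi => min_eq_right (mem_filter.1 hi).2, sum_const, nsmul_eq_mul]
    have hAc : ∑ i ∈ univ.filter (fun i => ¬ c ≤ y i), min (y i) c =
        ∑ i ∈ univ.filter (fun i => ¬ c ≤ y i), y i :=
      sum_congr rfl fun i hi => min_eq_left (not_le.1 (mem_filter.1 hi).2).le
    rw [hA, hAc]; ring
  have hx := topSum_le_sum_sub_sum_min x c (card_le_univ A |>.trans_eq (Fintype.card_fin n))
  linarith [sum_le_topSum y A, h.1 #A, h.2]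

end TopSum

open MeasureTheory (volume)
open intervalIntegral

section MinKernel

theorem Majorizes.sum_integral_mul_min_le {n : ℕ} {x y : Fin n → ℝ} (h : Majorizes x y)
    {w : ℝ → ℝ} {a b : ℝ} (hab : a ≤ b) (hw : ∀ s ∈ Set.Icc a b, 0 ≤ w s)
    (hx : ∀ i, IntervalIntegrable (fun s => w s * min (x i) s) volume a b)
    (hy : ∀ i, IntervalIntegrable (fun s => w s * min (y i) s) volume a b) :
    ∑ i, ∫ s in a..b, w s * min (x i) s ≤ ∑ i, ∫ s in a..b, w s * min (y i) s := by
  rw [← integral_finsetSum fun i _ => hx i, ← integral_finsetSum fun i _ => hy i]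
  refine integral_mono_on hab
    (by simpa only [sum_fn] using IntervalIntegrable.sum univ fun i _ => hx i)
    (by simpa only [sum_fn] using IntervalIntegrable.sum univ fun i _ => hy i) fun s hs => ?_
  simpa only [← mul_sum] using mul_le_mul_of_nonneg_left (h.sum_min_le s) (hw s hs)

theorem integral_min_left {t M : ℝ} (ht : 0 ≤ t) (htM : t ≤ M) :
    ∫ s in (0 : ℝ)..M, min t s = M * t - t ^ 2 / 2 := by
  have hc : Continuous fun s : ℝ => min t s := by fun_prop
  rw [← integral_add_adjacent_intervals (hc.intervalIntegrable 0 t) (hc.intervalIntegrable t M),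
    integral_congr fun s hs => min_eq_right (Set.uIcc_of_le ht ▸ hs).2,
    integral_congr (g := fun _ => t) fun s hs => min_eq_left (Set.uIcc_of_le htM ▸ hs).1,
    integral_id, integral_const, smul_eq_mul]
  ring

theorem abs_inv_mul_min_le_one {t : ℝ} (ht : 0 ≤ t) (s : ℝ) : |s⁻¹ * min t s| ≤ 1 := by
  rcases lt_trichotomy s 0 with hs | rfl | hs
  · rw [min_eq_right (hs.le.trans ht), inv_mul_cancel₀ hs.ne, abs_one]
  · simp
  · rw [abs_of_nonneg (by positivity), inv_mul_le_iff₀ hs, mul_one]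
    exact min_le_right t s

theorem intervalIntegrable_inv_mul_min {t : ℝ} (ht : 0 ≤ t) (a b : ℝ) :
    IntervalIntegrable (fun s => s⁻¹ * min t s) volume a b :=
  intervalIntegrable_const.mono_fun' (by fun_prop)
    (Filter.Eventually.of_forall fun s => by simpa using abs_inv_mul_min_le_one ht s)

theorem integral_inv_mul_min {t M : ℝ} (ht : 0 ≤ t) (htM : t ≤ M) :
    ∫ s in (0 : ℝ)..M, s⁻¹ * min t s = negMulLog t + t + t * log M := by
  rcases ht.eq_or_lt with rfl | ht
  · rw [integral_congr (g := fun _ => 0) fun s hs => by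
      simp [min_eq_left (Set.uIcc_of_le htM ▸ hs).1]]
    simp
  rw [← integral_add_adjacent_intervals (intervalIntegrable_inv_mul_min ht.le 0 t)
      (intervalIntegrable_inv_mul_min ht.le t M),
    integral_congr_ae (g := fun _ => (1 : ℝ)) (Filter.Eventually.of_forall fun s hs => by
      rw [Set.uIoc_of_le ht.le] at hs
      rw [min_eq_right hs.2, inv_mul_cancel₀ hs.1.ne']),
    integral_congr (a := t) (g := fun s => t * s⁻¹) fun s hs => by
      rw [min_eq_left (Set.uIcc_of_le htM ▸ hs).1, mul_comm],
    integral_const_mul, integral_inv (by simp [Set.uIcc_of_le htM, ht]),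
    integral_const, log_div (ht.trans_le htM).ne' ht.ne', negMulLog]
  simp
  ring

end MinKernel

section SchurConvexity

variable {n : ℕ} {x y : Fin n → ℝ}

theorem le_sum_of_nonneg (hx : ∀ i, 0 ≤ x i) (i : Fin n) : x i ≤ ∑ j, x j :=
  single_le_sum (fun j _ => hx j) (mem_univ i)

theorem Majorizes.le_sum_left (h : Majorizes x y) (hy : ∀ i, 0 ≤ y i) (i : Fin n) :
    y i ≤ ∑ j, x j :=
  h.2 ▸ le_sum_of_nonneg hy i

theorem Majorizes.sum_sq_le (h : Majorizes x y) (hx : ∀ i, 0 ≤ x i) (hy : ∀ i, 0 ≤ y i) :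
    ∑ i, y i ^ 2 ≤ ∑ i, x i ^ 2 := by
  have hint : ∀ t, IntervalIntegrable (fun s => 1 * min t s) volume 0 (∑ j, x j) := fun t =>
    (by fun_prop : Continuous fun s : ℝ => 1 * min t s).intervalIntegrable _ _
  have key := h.sum_integral_mul_min_le (sum_nonneg fun j _ => hx j) (fun _ _ => zero_le_one)
    (fun i => hint (x i)) (fun i => hint (y i))
  simp only [one_mul] at key
  rw [sum_congr rfl fun i _ => integral_min_left (hx i) (le_sum_of_nonneg hx i),
    sum_congr rfl fun i _ => integral_min_left (hy i) (h.le_sum_left hy i)] at key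
  simp only [sum_sub_distrib, ← mul_sum, ← sum_div, ← h.2] at key
  linarith

theorem Majorizes.sum_negMulLog_le (h : Majorizes x y) (hx : ∀ i, 0 ≤ x i) (hy : ∀ i, 0 ≤ y i) :
    ∑ i, negMulLog (x i) ≤ ∑ i, negMulLog (y i) := by
  have key := h.sum_integral_mul_min_le (b := ∑ j, x j) (sum_nonneg fun j _ => hx j)
    (fun s hs => inv_nonneg.2 hs.1)
    (fun i => intervalIntegrable_inv_mul_min (hx i) _ _)
    (fun i => intervalIntegrable_inv_mul_min (hy i) _ _)
  rw [sum_congr rfl fun i _ => integral_inv_mul_min (hx i) (le_sum_of_nonneg hx i),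
    sum_congr rfl fun i _ => integral_inv_mul_min (hy i) (h.le_sum_left hy i)] at key
  simp only [sum_add_distrib, ← sum_mul, ← h.2] at key
  linarith

end SchurConvexity

theorem stmt_9_general (n : ℕ) (P Q : Fin n → HypD) (s1 s2 : ℝ)
    (hPpos : ∀ j, 0 ≤ (P j).1 ∧ 0 ≤ (P j).2)
    (hQpos : ∀ j, 0 ≤ (Q j).1 ∧ 0 ≤ (Q j).2)
    (hmaj1 : Majorizes (fun j => (P j).1) (fun j => (Q j).1))
    (hmaj2 : Majorizes (fun j => (P j).2) (fun j => (Q j).2)) :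
    (∑ j, Real.negMulLog (P j).1 ≤ ∑ j, Real.negMulLog (Q j).1 ∧
      ∑ j, Real.negMulLog (P j).2 ≤ ∑ j, Real.negMulLog (Q j).2) ∧
    ((s1 - ∑ j, (P j).1 ^ 2) ≤ (s1 - ∑ j, (Q j).1 ^ 2) ∧
      (s2 - ∑ j, (P j).2 ^ 2) ≤ (s2 - ∑ j, (Q j).2 ^ 2)) := by
  have hP1 := fun j => (hPpos j).1
  have hP2 := fun j => (hPpos j).2
  have hQ1 := fun j => (hQpos j).1
  have hQ2 := fun j => (hQpos j).2
  exact ⟨⟨hmaj1.sum_negMulLog_le hP1 hQ1, hmaj2.sum_negMulLog_le hP2 hQ2⟩,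
    sub_le_sub_left (hmaj1.sum_sq_le hP1 hQ1) s1, sub_le_sub_left (hmaj2.sum_sq_le hP2 hQ2) s2⟩

theorem stmt_9 (n : ℕ) (hn : 2 ≤ n) (P Q : Fin n → HypD) (s1 s2 : ℝ)
    (hs1 : s1 = 0 ∨ s1 = 1) (hs2 : s2 = 0 ∨ s2 = 1) (hact : s1 = 1 ∨ s2 = 1)
    (hPpos : ∀ j, 0 ≤ (P j).1 ∧ 0 ≤ (P j).2)
    (hPsum1 : ∑ j, (P j).1 = s1) (hPsum2 : ∑ j, (P j).2 = s2)
    (hQpos : ∀ j, 0 ≤ (Q j).1 ∧ 0 ≤ (Q j).2)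
    (hQsum1 : ∑ j, (Q j).1 = s1) (hQsum2 : ∑ j, (Q j).2 = s2)
    (hmaj1 : Majorizes (fun j => (P j).1) (fun j => (Q j).1))
    (hmaj2 : Majorizes (fun j => (P j).2) (fun j => (Q j).2)) :
    (∑ j, Real.negMulLog (P j).1 ≤ ∑ j, Real.negMulLog (Q j).1 ∧
      ∑ j, Real.negMulLog (P j).2 ≤ ∑ j, Real.negMulLog (Q j).2) ∧
    ((s1 - ∑ j, (P j).1 ^ 2) ≤ (s1 - ∑ j, (Q j).1 ^ 2) ∧
      (s2 - ∑ j, (P j).2 ^ 2) ≤ (s2 - ∑ j, (Q j).2 ^ 2)) :=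
  stmt_9_general n P Q s1 s2 hPpos hQpos hmaj1 hmaj2
end

section
/- For every hyperbolic-valued probability distribution P on n ≥ 2 points: 0 ⪯ G_𝔻(P) ⪯ (s⁽¹⁾(P)e₁ + s⁽²⁾(P)e₂)(1 − 1/n), with the upper bound attained iff P = U_n^{s(P)} and the lower bound attained iff P is a hyperbolic vertex distribution. -/
/-! Both bounds and both equality cases are checked componentwise. An inactive component has
mass `0`, hence vanishes identically. For an active component `p`, the identities
`1 - ∑ pⱼ² = ∑ pⱼ (1 - pⱼ)` and `∑ (pⱼ - 1/n)² = ∑ pⱼ² - 1/n` exhibit the entropy and its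
distance to the maximum as sums of nonnegative terms; these vanish exactly at the vertices and
at the uniform distribution respectively. -/

open Finset

namespace GiniSimpson

variable {ι : Type*} [Fintype ι] {q : ι → ℝ}

theorem one_sub_sum_sq_eq_sum_mul_one_sub (hsum : ∑ i, q i = 1) :
    1 - ∑ i, q i ^ 2 = ∑ i, q i * (1 - q i) := by
  simp only [mul_one_sub, sum_sub_distrib, hsum, sq]

theorem le_one_of_sum_eq_one (hq : 0 ≤ q) (hsum : ∑ i, q i = 1) (i : ι) : q i ≤ 1 :=
  hsum ▸ single_le_sum (fun j _ => hq j) (mem_univ i)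

theorem mul_one_sub_nonneg_of_sum_eq_one (hq : 0 ≤ q) (hsum : ∑ i, q i = 1) :
    0 ≤ fun i => q i * (1 - q i) :=
  fun i => mul_nonneg (hq i) (sub_nonneg.2 (le_one_of_sum_eq_one hq hsum i))

theorem sum_sq_le_one (hq : 0 ≤ q) (hsum : ∑ i, q i = 1) : ∑ i, q i ^ 2 ≤ 1 := by
  rw [← sub_nonneg, one_sub_sum_sq_eq_sum_mul_one_sub hsum]
  exact Fintype.sum_nonneg (mul_one_sub_nonneg_of_sum_eq_one hq hsum)

-- Equality forces every `q i * (1 - q i)` to vanish, so `q` is `{0, 1}`-valued with total mass one.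
theorem sum_sq_eq_one_iff [DecidableEq ι] (hq : 0 ≤ q) (hsum : ∑ i, q i = 1) :
    ∑ i, q i ^ 2 = 1 ↔ ∃ a, ∀ i, q i = if i = a then 1 else 0 := by
  constructor
  · intro h
    have hzero : (fun i => q i * (1 - q i)) = 0 := by
      rw [← Fintype.sum_eq_zero_iff_of_nonneg (mul_one_sub_nonneg_of_sum_eq_one hq hsum),
        ← one_sub_sum_sq_eq_sum_mul_one_sub hsum, h, sub_self]
    obtain ⟨a, -, ha⟩ := exists_ne_zero_of_sum_ne_zero (hsum ▸ one_ne_zero : ∑ i, q i ≠ 0)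
    have hqa : q a = 1 := by
      have := congr_fun hzero a
      simp only [Pi.zero_apply, mul_eq_zero, ha, false_or, sub_eq_zero] at this
      exact this.symm
    have hrest : ∑ i ∈ univ.erase a, q i = 0 := by
      linarith [add_sum_erase univ q (mem_univ a)]
    refine ⟨a, fun i => ?_⟩
    split_ifs with hi
    · exact hi ▸ hqa
    · exact (sum_eq_zero_iff_of_nonneg fun j _ => hq j).1 hrest i (mem_erase.2 ⟨hi, mem_univ i⟩)
  · rintro ⟨a, ha⟩
    simp [ha]

theorem sum_sub_inv_card_sq (hsum : ∑ i, q i = 1) :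
    ∑ i, (q i - 1 / Fintype.card ι) ^ 2 = ∑ i, q i ^ 2 - 1 / Fintype.card ι := by
  have hcard : (Fintype.card ι : ℝ) ≠ 0 := by
    obtain ⟨a, -, -⟩ := exists_ne_zero_of_sum_ne_zero (hsum ▸ one_ne_zero : ∑ i, q i ≠ 0)
    exact Nat.cast_ne_zero.2 (Fintype.card_pos_iff.2 ⟨a⟩).ne'
  simp only [sub_sq, sum_add_distrib, sum_sub_distrib, ← sum_mul, ← mul_sum, hsum, sum_const,
    card_univ, nsmul_eq_mul]
  field_simp
  ring

theorem inv_card_le_sum_sq (hsum : ∑ i, q i = 1) : 1 / Fintype.card ι ≤ ∑ i, q i ^ 2 := by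
  rw [← sub_nonneg, ← sum_sub_inv_card_sq hsum]
  exact sum_nonneg fun i _ => sq_nonneg _

theorem sum_sq_eq_inv_card_iff (hsum : ∑ i, q i = 1) :
    ∑ i, q i ^ 2 = 1 / Fintype.card ι ↔ ∀ i, q i = 1 / Fintype.card ι := by
  rw [← sub_eq_zero, ← sum_sub_inv_card_sq hsum,
    Fintype.sum_eq_zero_iff_of_nonneg fun i => sq_nonneg _, funext_iff]
  simp only [Pi.zero_apply, sq_eq_zero_iff, sub_eq_zero]

variable {s : ℝ}

theorem sub_sum_sq_nonneg (hs : s = 0 ∨ s = 1) (hq : 0 ≤ q) (hsum : ∑ i, q i = s) :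
    0 ≤ s - ∑ i, q i ^ 2 := by
  rcases hs with rfl | rfl
  · simp [(Fintype.sum_eq_zero_iff_of_nonneg hq).1 hsum]
  · exact sub_nonneg.2 (sum_sq_le_one hq hsum)

theorem sub_sum_sq_le (hs : s = 0 ∨ s = 1) (hq : 0 ≤ q) (hsum : ∑ i, q i = s) :
    s - ∑ i, q i ^ 2 ≤ s * (1 - 1 / Fintype.card ι) := by
  rcases hs with rfl | rfl
  · simp [(Fintype.sum_eq_zero_iff_of_nonneg hq).1 hsum]
  · linarith [inv_card_le_sum_sq hsum]

theorem sub_sum_sq_eq_iff (hs : s = 0 ∨ s = 1) (hq : 0 ≤ q) (hsum : ∑ i, q i = s) :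
    s - ∑ i, q i ^ 2 = s * (1 - 1 / Fintype.card ι) ↔ ∀ i, q i = s / Fintype.card ι := by
  rcases hs with rfl | rfl
  · simp [(Fintype.sum_eq_zero_iff_of_nonneg hq).1 hsum]
  · rw [one_mul, sub_right_inj, sum_sq_eq_inv_card_iff hsum]

theorem sub_sum_sq_eq_zero_iff [DecidableEq ι] (hs : s = 0 ∨ s = 1) (hq : 0 ≤ q)
    (hsum : ∑ i, q i = s) :
    s - ∑ i, q i ^ 2 = 0 ↔ (s = 1 → ∃ a, ∀ i, q i = if i = a then 1 else 0) := by
  rcases hs with rfl | rfl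
  · simp [(Fintype.sum_eq_zero_iff_of_nonneg hq).1 hsum]
  · rw [sub_eq_zero, eq_comm, sum_sq_eq_one_iff hq hsum, imp_iff_right rfl]

end GiniSimpson

open GiniSimpson in
theorem stmt_11_general (n : ℕ) (P : Fin n → HypD) (s1 s2 : ℝ)
    (hs1 : s1 = 0 ∨ s1 = 1) (hs2 : s2 = 0 ∨ s2 = 1)
    (hpos : ∀ j, 0 ≤ (P j).1 ∧ 0 ≤ (P j).2)
    (hsum1 : ∑ j, (P j).1 = s1) (hsum2 : ∑ j, (P j).2 = s2) :
    (0 ≤ s1 - ∑ j, (P j).1 ^ 2 ∧ 0 ≤ s2 - ∑ j, (P j).2 ^ 2) ∧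
    (s1 - ∑ j, (P j).1 ^ 2 ≤ s1 * (1 - 1 / n) ∧
      s2 - ∑ j, (P j).2 ^ 2 ≤ s2 * (1 - 1 / n)) ∧
    ((s1 - ∑ j, (P j).1 ^ 2 = s1 * (1 - 1 / n) ∧
        s2 - ∑ j, (P j).2 ^ 2 = s2 * (1 - 1 / n)) ↔
      ∀ j, P j = (s1 / n, s2 / n)) ∧
    ((s1 - ∑ j, (P j).1 ^ 2 = 0 ∧ s2 - ∑ j, (P j).2 ^ 2 = 0) ↔
      ((s1 = 1 → ∃ α : Fin n, ∀ j, (P j).1 = if j = α then 1 else 0) ∧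
        (s2 = 1 → ∃ β : Fin n, ∀ j, (P j).2 = if j = β then 1 else 0))) := by
  have hq1 : 0 ≤ fun j => (P j).1 := fun j => (hpos j).1
  have hq2 : 0 ≤ fun j => (P j).2 := fun j => (hpos j).2
  have le1 := sub_sum_sq_le hs1 hq1 hsum1
  have le2 := sub_sum_sq_le hs2 hq2 hsum2
  have eq1 := sub_sum_sq_eq_iff hs1 hq1 hsum1
  have eq2 := sub_sum_sq_eq_iff hs2 hq2 hsum2
  simp only [Fintype.card_fin] at le1 le2 eq1 eq2
  refine ⟨⟨sub_sum_sq_nonneg hs1 hq1 hsum1, sub_sum_sq_nonneg hs2 hq2 hsum2⟩, ⟨le1, le2⟩, ?_,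
    by rw [sub_sum_sq_eq_zero_iff hs1 hq1 hsum1, sub_sum_sq_eq_zero_iff hs2 hq2 hsum2]⟩
  rw [eq1, eq2, ← forall_and]
  simp only [Prod.ext_iff]

theorem stmt_11 (n : ℕ) (hn : 2 ≤ n) (P : Fin n → HypD) (s1 s2 : ℝ)
    (hs1 : s1 = 0 ∨ s1 = 1) (hs2 : s2 = 0 ∨ s2 = 1) (hact : s1 = 1 ∨ s2 = 1)
    (hpos : ∀ j, 0 ≤ (P j).1 ∧ 0 ≤ (P j).2)
    (hsum1 : ∑ j, (P j).1 = s1) (hsum2 : ∑ j, (P j).2 = s2) :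
    (0 ≤ s1 - ∑ j, (P j).1 ^ 2 ∧ 0 ≤ s2 - ∑ j, (P j).2 ^ 2) ∧
    (s1 - ∑ j, (P j).1 ^ 2 ≤ s1 * (1 - 1 / n) ∧
      s2 - ∑ j, (P j).2 ^ 2 ≤ s2 * (1 - 1 / n)) ∧
    ((s1 - ∑ j, (P j).1 ^ 2 = s1 * (1 - 1 / n) ∧
        s2 - ∑ j, (P j).2 ^ 2 = s2 * (1 - 1 / n)) ↔
      ∀ j, P j = (s1 / n, s2 / n)) ∧
    ((s1 - ∑ j, (P j).1 ^ 2 = 0 ∧ s2 - ∑ j, (P j).2 ^ 2 = 0) ↔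
      ((s1 = 1 → ∃ α : Fin n, ∀ j, (P j).1 = if j = α then 1 else 0) ∧
        (s2 = 1 → ∃ β : Fin n, ∀ j, (P j).2 = if j = β then 1 else 0))) :=
  stmt_11_general n P s1 s2 hs1 hs2 hpos hsum1 hsum2
end

section
/- Let x = (x₁,…,xₙ) be a real probability vector sorted decreasingly (x₁ ≥ … ≥ xₙ, ∑xᵢ = 1, n ≥ 2). Then for every k ∈ {1,…,n−1} and every j, (1 − x_j)/(n−1) ≤ (1/k)∑_{i=1}^k xᵢ. Consequently x majorizes its Yager negation ((1−x₁)/(n−1),…,(1−xₙ)/(n−1)). For hyperbolic distributions this gives P ⪰_{𝔻,maj} 𝒴(P). -/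
section AuxMaj
open Finset
variable {n : ℕ}

lemma card_filter_lt (n k : ℕ) (hk : k ≤ n) :
    (Finset.univ.filter (fun i : Fin n => (i : ℕ) < k)).card = k := by
  have : (Finset.univ.filter (fun i : Fin n => (i : ℕ) < k))
      = Finset.map (Fin.castLEEmb hk) Finset.univ := by
    ext i
    simp only [mem_filter, mem_univ, true_and, Finset.mem_map, Fin.castLEEmb,
      Function.Embedding.coeFn_mk]
    constructor
    · intro h; exact ⟨⟨i, h⟩, by simp [Fin.castLE]⟩
    · rintro ⟨j, _, rfl⟩; simp
  rw [this, Finset.card_map, Finset.card_univ, Fintype.card_fin]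

lemma topSum_bdd {n : ℕ} (x : Fin n → ℝ) (k : ℕ) :
    BddAbove ((fun A : Finset (Fin n) => ∑ i ∈ A, x i) '' {A | A.card = k}) :=
  (Set.toFinite _).bddAbove

lemma le_topSum {n : ℕ} (x : Fin n → ℝ) {k : ℕ} {A : Finset (Fin n)}
    (hA : A.card = k) : ∑ i ∈ A, x i ≤ topSum x k :=
  le_csSup (topSum_bdd x k) ⟨A, hA, rfl⟩

lemma topSum_le {n : ℕ} (x : Fin n → ℝ) {k : ℕ} (hk : k ≤ n) {c : ℝ}
    (h : ∀ A : Finset (Fin n), A.card = k → ∑ i ∈ A, x i ≤ c) :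
    topSum x k ≤ c := by
  apply csSup_le
  · obtain ⟨B, -, hB⟩ := Finset.exists_subset_card_eq (s := (Finset.univ : Finset (Fin n)))
      (by simpa using hk)
    exact ⟨_, ⟨B, hB, rfl⟩⟩
  · rintro y ⟨A, hA, rfl⟩; exact h A hA

lemma topSum_of_gt {n : ℕ} (x : Fin n → ℝ) {k : ℕ} (hk : n < k) :
    topSum x k = 0 := by
  have : {A : Finset (Fin n) | A.card = k} = ∅ := by
    ext A
    simp only [Set.mem_setOf_eq, Set.mem_empty_iff_false, iff_false]
    intro h
    exact absurd (h ▸ Finset.card_le_univ A) (by simpa using hk.not_ge)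
  rw [topSum, this, Set.image_empty, Real.sSup_empty]

lemma topSum_comp_perm {n : ℕ} (x : Fin n → ℝ) (σ : Equiv.Perm (Fin n)) (k : ℕ) :
    topSum (fun i => x (σ i)) k = topSum x k := by
  unfold topSum
  congr 1
  ext b
  constructor
  · rintro ⟨A, hA, rfl⟩
    refine ⟨A.image σ, by simpa [Finset.card_image_of_injective _ σ.injective] using hA, ?_⟩
    show ∑ i ∈ A.image σ, x i = ∑ i ∈ A, x (σ i)
    exact Finset.sum_image (fun a _ b _ h => σ.injective h)
  · rintro ⟨B, hB, rfl⟩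
    refine ⟨B.image σ.symm, by simpa [Finset.card_image_of_injective _ σ.symm.injective] using hB, ?_⟩
    show ∑ i ∈ B.image σ.symm, x (σ i) = ∑ i ∈ B, x i
    rw [Finset.sum_image (fun a _ b _ h => σ.symm.injective h)]
    simp

lemma Sf_succ (x : Fin n → ℝ) {m : ℕ} (hm : m < n) :
    ∑ i ∈ Finset.univ.filter (fun i : Fin n => (i : ℕ) < m + 1), x i
      = (∑ i ∈ Finset.univ.filter (fun i : Fin n => (i : ℕ) < m), x i) + x ⟨m, hm⟩ := by
  have hins : Finset.univ.filter (fun i : Fin n => (i : ℕ) < m + 1)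
      = insert ⟨m, hm⟩ (Finset.univ.filter (fun i : Fin n => (i : ℕ) < m)) := by
    ext i
    simp only [mem_filter, mem_univ, true_and, Finset.mem_insert]
    constructor
    · intro h
      rcases Nat.lt_succ_iff_lt_or_eq.mp h with h | h
      · exact Or.inr h
      · exact Or.inl (by ext; exact h)
    · rintro (rfl | h)
      · simp
      · exact Nat.lt_succ_of_lt h
  rw [hins, Finset.sum_insert (by simp)]
  ring

lemma smul_le_Sf {x : Fin n → ℝ} (hant : Antitone x) {k m : ℕ} (hm : m < n) (hkm : k ≤ m)
    (hkn : k ≤ n) :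
    (k : ℝ) * x ⟨m, hm⟩ ≤ ∑ i ∈ Finset.univ.filter (fun i : Fin n => (i : ℕ) < k), x i := by
  have := Finset.card_nsmul_le_sum (Finset.univ.filter (fun i : Fin n => (i : ℕ) < k)) x
    (x ⟨m, hm⟩) (fun i hi => by
      apply hant
      simp only [mem_filter, mem_univ, true_and] at hi
      exact Fin.le_def.mpr (le_trans (Nat.le_of_lt hi) hkm))
  rwa [card_filter_lt n k hkn, nsmul_eq_mul] at this

lemma avg_antitone {x : Fin n → ℝ} (hant : Antitone x) {k m : ℕ} (hkm : k ≤ m) (hmn : m ≤ n) :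
    (k : ℝ) * ∑ i ∈ Finset.univ.filter (fun i : Fin n => (i : ℕ) < m), x i
      ≤ (m : ℝ) * ∑ i ∈ Finset.univ.filter (fun i : Fin n => (i : ℕ) < k), x i := by
  induction m, hkm using Nat.le_induction with
  | base => exact le_rfl
  | succ m hkm ih =>
      have hmn' : m < n := by omega
      have ih' := ih (le_of_lt hmn')
      rw [Sf_succ x hmn']
      have h2 := smul_le_Sf hant hmn' hkm (by omega)
      push_cast
      nlinarith

lemma Sf_n (x : Fin n → ℝ) :
    ∑ i ∈ Finset.univ.filter (fun i : Fin n => (i : ℕ) < n), x i = ∑ i, x i := by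
  apply Finset.sum_congr _ (fun _ _ => rfl)
  ext i; simp [i.isLt]

lemma scalar_ineq (hn : 2 ≤ n) {x : Fin n → ℝ} (hsum : ∑ i, x i = 1)
    (hant : Antitone x) {k : ℕ} (hk1 : 1 ≤ k) (hk : k ≤ n - 1) (j : Fin n) :
    (1 - x j) / ((n : ℝ) - 1)
      ≤ (1 / (k : ℝ)) * ∑ i ∈ Finset.univ.filter (fun i : Fin n => (i : ℕ) < k), x i := by
  have hn1 : n - 1 < n := by omega
  have hsplit : (∑ i ∈ Finset.univ.filter (fun i : Fin n => (i : ℕ) < n - 1), x i)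
      + x ⟨n - 1, hn1⟩ = 1 := by
    rw [← Sf_succ x hn1]
    have : n - 1 + 1 = n := by omega
    rw [this, Sf_n, hsum]
  have hxj : x ⟨n - 1, hn1⟩ ≤ x j := hant (Fin.le_def.mpr (Nat.le_sub_one_of_lt j.isLt))
  have h1 : 1 - x j ≤ ∑ i ∈ Finset.univ.filter (fun i : Fin n => (i : ℕ) < n - 1), x i := by
    linarith
  have havg := avg_antitone hant hk (le_of_lt hn1)
  have hcast : ((n - 1 : ℕ) : ℝ) = (n : ℝ) - 1 := by
    have : (1 : ℕ) ≤ n := by omega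
    push_cast [this]; ring
  have hnpos : (0 : ℝ) < (n : ℝ) - 1 := by
    have : (2 : ℝ) ≤ (n : ℝ) := by exact_mod_cast hn
    linarith
  have hkpos : (0 : ℝ) < (k : ℝ) := by exact_mod_cast hk1
  rw [hcast] at havg
  rw [div_le_iff₀ hnpos]
  rw [one_div, inv_mul_eq_div] at *
  calc 1 - x j ≤ ∑ i ∈ Finset.univ.filter (fun i : Fin n => (i : ℕ) < n - 1), x i := h1
    _ ≤ (∑ i ∈ Finset.univ.filter (fun i : Fin n => (i : ℕ) < k), x i) / k * ((n:ℝ) - 1) := by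
        rw [div_mul_eq_mul_div, le_div_iff₀ hkpos]
        linarith

lemma sum_yager (hn : 2 ≤ n) {x : Fin n → ℝ} (hsum : ∑ i, x i = 1) :
    ∑ i, (1 - x i) / ((n : ℝ) - 1) = 1 := by
  have hne : (n : ℝ) - 1 ≠ 0 := by
    have : (2 : ℝ) ≤ (n : ℝ) := by exact_mod_cast hn
    linarith
  rw [← Finset.sum_div, Finset.sum_sub_distrib, hsum, Finset.sum_const, Finset.card_univ,
    Fintype.card_fin, nsmul_eq_mul, mul_one, div_eq_one_iff_eq hne]

lemma maj_antitone (hn : 2 ≤ n) {x : Fin n → ℝ} (hx : ∀ i, 0 ≤ x i) (hsum : ∑ i, x i = 1)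
    (hant : Antitone x) : Majorizes x (fun j => (1 - x j) / ((n : ℝ) - 1)) := by
  constructor
  · intro k
    rcases Nat.lt_or_ge n k with hk | hk
    · rw [topSum_of_gt _ hk, topSum_of_gt _ hk]
    rcases Nat.eq_zero_or_pos k with rfl | hk1
    · apply topSum_le _ (Nat.zero_le n)
      intro A hA
      rw [Finset.card_eq_zero.mp hA, Finset.sum_empty]
      have : (0:ℝ) = ∑ i ∈ (∅ : Finset (Fin n)), x i := by simp
      rw [this]
      exact le_topSum x (Finset.card_empty)
    rcases Nat.lt_or_ge k n with hkn | hkn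
    · -- 1 ≤ k ≤ n - 1
      have hk' : k ≤ n - 1 := by omega
      apply topSum_le _ (le_of_lt hkn)
      intro A hA
      have hbound : ∀ j ∈ A, (1 - x j) / ((n : ℝ) - 1)
          ≤ (1 / (k : ℝ)) * ∑ i ∈ Finset.univ.filter (fun i : Fin n => (i : ℕ) < k), x i :=
        fun j _ => scalar_ineq hn hsum hant hk1 hk' j
      calc ∑ j ∈ A, (1 - x j) / ((n : ℝ) - 1)
          ≤ ∑ _j ∈ A, (1 / (k : ℝ)) * ∑ i ∈ Finset.univ.filter (fun i : Fin n => (i : ℕ) < k), x i :=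
            Finset.sum_le_sum hbound
        _ = ∑ i ∈ Finset.univ.filter (fun i : Fin n => (i : ℕ) < k), x i := by
            rw [Finset.sum_const, hA, nsmul_eq_mul]
            have hkne : (k : ℝ) ≠ 0 := by positivity
            field_simp
        _ ≤ topSum x k := le_topSum x (card_filter_lt n k (le_of_lt hkn))
    · -- k = n
      have hkn' : k = n := le_antisymm hk hkn
      apply topSum_le _ hk
      intro A hA
      have hAu : A = Finset.univ := Finset.eq_univ_of_card A (by rw [hA, hkn', Fintype.card_fin])
      rw [hAu]
      have h1 : ∑ j : Fin n, (1 - x j) / ((n : ℝ) - 1) = 1 := sum_yager hn hsum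
      rw [h1, ← hsum]
      exact le_topSum x (by simp [hkn'])
  · rw [hsum, sum_yager hn hsum]

lemma maj_general (hn : 2 ≤ n) {x : Fin n → ℝ} (hx : ∀ i, 0 ≤ x i) (hsum : ∑ i, x i = 1) :
    Majorizes x (fun j => (1 - x j) / ((n : ℝ) - 1)) := by
  set σ := Tuple.sort (fun i => -x i) with hσ
  have hmono : Monotone ((fun i => -x i) ∘ σ) := Tuple.monotone_sort _
  have hant : Antitone (fun i => x (σ i)) := by
    intro a b hab
    have := hmono hab
    simpa using this
  have hsum' : ∑ i, x (σ i) = 1 := by rw [Equiv.sum_comp σ x]; exact hsum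
  have hmaj := maj_antitone hn (fun i => hx (σ i)) hsum' hant
  constructor
  · intro k
    have h1 : topSum (fun j => (1 - x j) / ((n : ℝ) - 1)) k
        = topSum (fun j => (1 - x (σ j)) / ((n : ℝ) - 1)) k :=
      (topSum_comp_perm (fun j => (1 - x j) / ((n : ℝ) - 1)) σ k).symm
    rw [h1, ← topSum_comp_perm x σ k]
    exact hmaj.1 k
  · rw [hsum, sum_yager hn hsum]

end AuxMaj

theorem stmt_15 (n : ℕ) (hn : 2 ≤ n) :
    (∀ x : Fin n → ℝ, (∀ i, 0 ≤ x i) → ∑ i, x i = 1 → Antitone x →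
      (∀ k : ℕ, 1 ≤ k → k ≤ n - 1 → ∀ j,
        (1 - x j) / ((n : ℝ) - 1)
          ≤ (1 / (k : ℝ)) * ∑ i ∈ Finset.univ.filter (fun i : Fin n => (i : ℕ) < k), x i) ∧
      Majorizes x (fun j => (1 - x j) / ((n : ℝ) - 1))) ∧
    (∀ P : Fin n → HypD, ∀ s1 s2 : ℝ,
      (∀ j, 0 ≤ (P j).1 ∧ 0 ≤ (P j).2) →
      (s1 = 0 ∨ s1 = 1) → (s2 = 0 ∨ s2 = 1) → (s1 = 1 ∨ s2 = 1) →
      ∑ j, (P j).1 = s1 → ∑ j, (P j).2 = s2 →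
      Majorizes (fun j => (P j).1) (fun j => (s1 - (P j).1) / ((n : ℝ) - 1)) ∧
      Majorizes (fun j => (P j).2) (fun j => (s2 - (P j).2) / ((n : ℝ) - 1))) := by
  constructor
  · intro x hx hsum hant
    exact ⟨fun k hk1 hk j => scalar_ineq hn hsum hant hk1 hk j, maj_antitone hn hx hsum hant⟩
  · intro P s1 s2 hP hs1 hs2 h12 hsum1 hsum2
    have key : ∀ (f : Fin n → ℝ) (s : ℝ), (∀ j, 0 ≤ f j) → (s = 0 ∨ s = 1) → ∑ j, f j = s →
        Majorizes f (fun j => (s - f j) / ((n : ℝ) - 1)) := by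
      intro f s hf hs hsumf
      rcases hs with rfl | rfl
      · have hz : ∀ j, f j = 0 := fun j =>
          (Finset.sum_eq_zero_iff_of_nonneg (fun i _ => hf i)).mp hsumf j (Finset.mem_univ j)
        have h1 : (fun j => ((0 : ℝ) - f j) / ((n : ℝ) - 1)) = f := by
          funext j; rw [hz j]; simp
        rw [h1]
        exact ⟨fun k => le_rfl, rfl⟩
      · exact maj_general hn hf hsumf
    exact ⟨key _ s1 (fun j => (hP j).1) hs1 hsum1, key _ s2 (fun j => (hP j).2) hs2 hsum2⟩
end

section
/- Let n ≥ 2 and let φ: [0,1] → [0,∞) be applied entrywise to a probability vector x with x₁ ≥ … ≥ xₙ, where: φ(t) = 0 whenever t = 1; φ is non-increasing; and t ↦ φ(t)/(1−t) is non-decreasing on [0,1). Assume ∑_j φ(x_j) > 0. Then the Yager negation ((1−x_j)/(n−1))_j majorizes the normalized vector (φ(x_j)/∑ᵢφ(xᵢ))_j. In particular, by transitivity with the previous result, x majorizes (φ(x_j)/∑ᵢφ(xᵢ))_j. -/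
/-!
Both vectors `φ ∘ x / ∑ φ ∘ x` and `(1 - x) / (n - 1)` are decreasing functions of the entries
of `x`, so for every `k` the set `T` of the `k` smallest entries of `x` carries the `k` largest
entries of both. The monotonicity of `φ(t) / (1 - t)` gives `φ(xᵢ)(1 - xⱼ) ≤ φ(xⱼ)(1 - xᵢ)` for
`i ∈ T`, `j ∉ T`; summing over these pairs yields `∑_T φ(x) / ∑ φ(x) ≤ ∑_T (1 - x) / (n - 1)`.
That `x` majorizes its Yager negation is the bathtub principle, applied to the weights
`(k - [j ∈ T]) / (n - 1)`.
-/

open Finset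

def IsTopSet {ι : Type*} (v : ι → ℝ) (T : Finset ι) : Prop :=
  ∀ i ∈ T, ∀ j ∉ T, v j ≤ v i

namespace IsTopSet

variable {ι : Type*} [Fintype ι] {v : ι → ℝ} {T : Finset ι}

lemma exists_threshold (hT : IsTopSet v T) :
    ∃ p, (∀ i ∈ T, p ≤ v i) ∧ ∀ j ∉ T, v j ≤ p := by
  rcases T.eq_empty_or_nonempty with rfl | hne
  · refine ⟨∑ j, |v j|, by simp, fun j _ => ?_⟩
    exact (le_abs_self _).trans (single_le_sum (fun i _ => abs_nonneg (v i)) (mem_univ j))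
  · exact ⟨T.inf' hne v, fun i hi => inf'_le v hi,
      fun j hj => le_inf' hne v fun i hi => hT i hi j hj⟩

-- Bathtub principle.
lemma sum_mul_le (hT : IsTopSet v T) {c : ι → ℝ} (hc0 : ∀ j, 0 ≤ c j) (hc1 : ∀ j, c j ≤ 1)
    (hcs : ∑ j, c j = #T) : ∑ j, c j * v j ≤ ∑ j ∈ T, v j := by
  classical
  obtain ⟨p, hpT, hpTc⟩ := hT.exists_threshold
  have hterm : ∀ j, (c j - if j ∈ T then 1 else 0) * (v j - p) ≤ 0 := by
    intro j
    by_cases hj : j ∈ T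
    · simp only [hj, if_true]
      exact mul_nonpos_of_nonpos_of_nonneg (by linarith [hc1 j]) (by linarith [hpT j hj])
    · simp only [hj, if_false, sub_zero]
      exact mul_nonpos_of_nonneg_of_nonpos (hc0 j) (by linarith [hpTc j hj])
  have hsplit : ∑ j, (c j - if j ∈ T then 1 else 0) * (v j - p)
      = ∑ j, c j * v j - ∑ j ∈ T, v j := by
    simp only [sub_mul, mul_sub, ite_mul, one_mul, zero_mul, sum_sub_distrib, ← sum_mul,
      sum_ite_mem, univ_inter, sum_const, nsmul_eq_mul, hcs]
    ring
  linarith [sum_nonpos fun j (_ : j ∈ univ) => hterm j]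

end IsTopSet

section TopSum

variable {n : ℕ}

lemma IsTopSet.topSum_eq {v : Fin n → ℝ} {T : Finset (Fin n)} (hT : IsTopSet v T) {k : ℕ}
    (hk : #T = k) : topSum v k = ∑ i ∈ T, v i := by
  subst hk
  refine IsGreatest.csSup_eq ⟨⟨T, rfl, rfl⟩, ?_⟩
  rintro _ ⟨A, hA, rfl⟩
  have := hT.sum_mul_le (c := fun j => if j ∈ A then 1 else 0) (fun j => by split_ifs <;> simp)
    (fun j => by split_ifs <;> simp) (by simpa using hA)
  simpa [ite_mul, sum_ite_mem] using this

lemma topSum_of_lt {v : Fin n → ℝ} {k : ℕ} (hk : n < k) : topSum v k = 0 := by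
  have hempty : {A : Finset (Fin n) | #A = k} = ∅ := by
    ext A
    simpa using ((card_le_univ A).trans_lt (by simpa using hk)).ne
  rw [topSum, hempty, Set.image_empty, Real.sSup_empty]

lemma majorizes_of_forall_le {u v : Fin n → ℝ} (h : ∀ k ≤ n, topSum v k ≤ topSum u k)
    (hsum : ∑ i, u i = ∑ i, v i) : Majorizes u v := by
  refine ⟨fun k => ?_, hsum⟩
  rcases le_or_gt k n with hk | hk
  · exact h k hk
  · rw [topSum_of_lt hk, topSum_of_lt hk]

lemma Majorizes.trans {u v w : Fin n → ℝ} (huv : Majorizes u v) (hvw : Majorizes v w) :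
    Majorizes u w :=
  ⟨fun k => (hvw.1 k).trans (huv.1 k), huv.2.trans hvw.2⟩

lemma Antitone.isTopSet_prefix {v : Fin n → ℝ} (hv : Antitone v) (m : ℕ) :
    IsTopSet v {j : Fin n | (j : ℕ) < m} := by
  intro i hi j hj
  simp only [mem_filter, mem_univ, true_and, not_lt] at hi hj
  exact hv (Fin.le_def.2 (by omega))

lemma Monotone.isTopSet_compl_prefix {v : Fin n → ℝ} (hv : Monotone v) (m : ℕ) :
    IsTopSet v ({j : Fin n | (j : ℕ) < m} : Finset (Fin n))ᶜ := by
  intro i hi j hj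
  simp only [mem_compl, mem_filter, mem_univ, true_and, not_lt] at hi hj
  exact hv (Fin.le_def.2 (by omega))

lemma card_compl_prefix {k : ℕ} (hk : k ≤ n) :
    #({j : Fin n | (j : ℕ) < n - k} : Finset (Fin n))ᶜ = k := by
  rw [card_compl, Fintype.card_fin, Fin.card_filter_val_lt]
  omega

end TopSum

lemma mul_one_sub_le_mul_one_sub {φ : ℝ → ℝ} (hφone : φ 1 = 0)
    (hφquot : ∀ s t, 0 ≤ s → s ≤ t → t < 1 → φ s / (1 - s) ≤ φ t / (1 - t))
    {s t : ℝ} (hs : 0 ≤ s) (hst : s ≤ t) (ht : t ≤ 1) : φ s * (1 - t) ≤ φ t * (1 - s) := by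
  rcases ht.eq_or_lt with rfl | ht
  · simp [hφone]
  · have := hφquot s t hs hst ht
    rwa [div_le_div_iff₀ (by linarith) (by linarith)] at this

lemma sum_div_sum_le_of_mul_le_mul {ι : Type*} [Fintype ι] {f g : ι → ℝ} {T : Finset ι}
    (hcross : ∀ i ∈ T, ∀ j ∉ T, f i * g j ≤ f j * g i) (hf : 0 < ∑ j, f j)
    (hg : 0 < ∑ j, g j) : (∑ i ∈ T, f i) / ∑ j, f j ≤ (∑ i ∈ T, g i) / ∑ j, g j := by
  classical
  have hmain : (∑ i ∈ T, f i) * ∑ j ∈ Tᶜ, g j ≤ (∑ j ∈ Tᶜ, f j) * ∑ i ∈ T, g i := by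
    rw [sum_mul_sum, sum_mul_sum, sum_comm (s := Tᶜ)]
    exact sum_le_sum fun i hi => sum_le_sum fun j hj => hcross i hi j (mem_compl.1 hj)
  rw [div_le_div_iff₀ hf hg, ← sum_add_sum_compl T f, ← sum_add_sum_compl T g]
  linear_combination hmain

noncomputable def yagerNegation {n : ℕ} (x : Fin n → ℝ) : Fin n → ℝ :=
  fun j => (1 - x j) / ((n : ℝ) - 1)

section Yager

variable {n : ℕ} {x : Fin n → ℝ}

lemma sum_one_sub (hsum : ∑ i, x i = 1) : ∑ j, (1 - x j) = (n : ℝ) - 1 := by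
  simp [sum_sub_distrib, hsum]

lemma yagerNegation_monotone (hn : 2 ≤ n) (hx : Antitone x) : Monotone (yagerNegation x) := by
  have hn1 : (0 : ℝ) < n - 1 := sub_pos.2 (by exact_mod_cast hn)
  intro i j hij
  unfold yagerNegation
  gcongr
  exact hx hij

lemma sum_yagerNegation (hn : 2 ≤ n) (hsum : ∑ i, x i = 1) : ∑ j, yagerNegation x j = 1 := by
  have hn1 : (0 : ℝ) < n - 1 := sub_pos.2 (by exact_mod_cast hn)
  simp only [yagerNegation]
  rw [← sum_div, sum_one_sub hsum, div_self hn1.ne']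

/-- Written as `∑ j, c j * x j` with `c j = (#T - [j ∈ T]) / (n - 1)` (using `∑ x = 1`), the left
side is a bathtub sum with weights in `[0, 1]` of total mass `#T`. -/
lemma sum_yagerNegation_le (hn : 2 ≤ n) (hsum : ∑ i, x i = 1) {P T : Finset (Fin n)}
    (hP : IsTopSet x P) (hTP : #T = #P) : ∑ j ∈ T, yagerNegation x j ≤ ∑ j ∈ P, x j := by
  have hn1 : (1 : ℝ) < n := by exact_mod_cast hn
  set c : Fin n → ℝ := fun j => ((#T : ℝ) - if j ∈ T then 1 else 0) / (n - 1)
  have hc0 : ∀ j, 0 ≤ c j := by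
    intro j
    refine div_nonneg ?_ (by linarith)
    split_ifs with hj
    · exact sub_nonneg.2 (by exact_mod_cast card_pos.2 ⟨j, hj⟩)
    · simp
  have hc1 : ∀ j, c j ≤ 1 := by
    intro j
    rw [div_le_one (by linarith)]
    split_ifs with hj
    · have : (#T : ℝ) ≤ n := by exact_mod_cast (card_le_univ T).trans_eq (Fintype.card_fin n)
      linarith
    · have : #T < n := (card_lt_univ_of_notMem hj).trans_eq (Fintype.card_fin n)
      have : (#T : ℝ) + 1 ≤ n := by exact_mod_cast this
      linarith
  have hcs : ∑ j, c j = #P := by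
    simp only [c, ← sum_div, sum_sub_distrib, sum_const, card_univ, Fintype.card_fin,
      nsmul_eq_mul, sum_boole, filter_mem_eq_inter, univ_inter, hTP]
    rw [div_eq_iff (by linarith)]
    ring
  have hcx : ∑ j, c j * x j = ∑ j ∈ T, yagerNegation x j := by
    simp only [c, yagerNegation, div_mul_eq_mul_div, ← sum_div, sub_mul, sum_sub_distrib,
      ← mul_sum, hsum, ite_mul, one_mul, zero_mul, sum_ite_mem, univ_inter, sum_const,
      nsmul_eq_mul, mul_one]
  exact hcx ▸ hP.sum_mul_le hc0 hc1 hcs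

lemma majorizes_yagerNegation (hn : 2 ≤ n) (hsum : ∑ i, x i = 1) (hx : Antitone x) :
    Majorizes x (yagerNegation x) := by
  refine majorizes_of_forall_le (fun k hk => ?_) (by rw [hsum, sum_yagerNegation hn hsum])
  have hP : #({j : Fin n | (j : ℕ) < k} : Finset (Fin n)) = k := by
    rw [Fin.card_filter_val_lt]
    omega
  rw [((yagerNegation_monotone hn hx).isTopSet_compl_prefix _).topSum_eq (card_compl_prefix hk),
    (hx.isTopSet_prefix k).topSum_eq hP]
  exact sum_yagerNegation_le hn hsum (hx.isTopSet_prefix k) (by rw [card_compl_prefix hk, hP])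

end Yager

theorem stmt_16_general (n : ℕ) (hn : 2 ≤ n) (x : Fin n → ℝ)
    (hpos : ∀ i, 0 ≤ x i) (hsum : ∑ i, x i = 1) (hsort : Antitone x)
    (φ : ℝ → ℝ)
    (hφone : φ 1 = 0)
    (hφmono : ∀ s t, 0 ≤ s → s ≤ t → t ≤ 1 → φ t ≤ φ s)
    (hφquot : ∀ s t, 0 ≤ s → s ≤ t → t < 1 → φ s / (1 - s) ≤ φ t / (1 - t))
    (hZ : 0 < ∑ j, φ (x j)) :
    Majorizes (fun j => (1 - x j) / ((n : ℝ) - 1))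
      (fun j => φ (x j) / ∑ i, φ (x i)) ∧
    Majorizes x (fun j => φ (x j) / ∑ i, φ (x i)) := by
  have hx1 : ∀ i, x i ≤ 1 := fun i => hsum ▸ single_le_sum (fun j _ => hpos j) (mem_univ i)
  have hn1 : (0 : ℝ) < n - 1 := sub_pos.2 (by exact_mod_cast hn)
  have hyager : Majorizes (yagerNegation x) (fun j => φ (x j) / ∑ i, φ (x i)) := by
    refine majorizes_of_forall_le (fun k hk => ?_) ?_
    · set T := ({j : Fin n | (j : ℕ) < n - k} : Finset (Fin n))ᶜ
      have hxT : IsTopSet (-x) T := hsort.neg.isTopSet_compl_prefix _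
      have hφT : IsTopSet (fun j => φ (x j) / ∑ i, φ (x i)) T := fun i hi j hj =>
        div_le_div_of_nonneg_right
          (hφmono _ _ (hpos i) (neg_le_neg_iff.1 (hxT i hi j hj)) (hx1 j)) hZ.le
      rw [hφT.topSum_eq (card_compl_prefix hk),
        ((yagerNegation_monotone hn hsort).isTopSet_compl_prefix _).topSum_eq
          (card_compl_prefix hk)]
      simp only [yagerNegation, ← sum_div]
      rw [← sum_one_sub hsum]
      refine sum_div_sum_le_of_mul_le_mul (fun i hi j hj => ?_) hZ
        (by rw [sum_one_sub hsum]; exact hn1)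
      exact mul_one_sub_le_mul_one_sub hφone hφquot (hpos i)
        (neg_le_neg_iff.1 (hxT i hi j hj)) (hx1 j)
    · rw [sum_yagerNegation hn hsum, ← sum_div, div_self hZ.ne']
  exact ⟨hyager, (majorizes_yagerNegation hn hsum hsort).trans hyager⟩

theorem stmt_16 (n : ℕ) (hn : 2 ≤ n) (x : Fin n → ℝ)
    (hpos : ∀ i, 0 ≤ x i) (hsum : ∑ i, x i = 1) (hsort : Antitone x)
    (φ : ℝ → ℝ)
    (hφpos : ∀ t, 0 ≤ t → t ≤ 1 → 0 ≤ φ t)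
    (hφone : φ 1 = 0)
    (hφmono : ∀ s t, 0 ≤ s → s ≤ t → t ≤ 1 → φ t ≤ φ s)
    (hφquot : ∀ s t, 0 ≤ s → s ≤ t → t < 1 → φ s / (1 - s) ≤ φ t / (1 - t))
    (hZ : 0 < ∑ j, φ (x j)) :
    Majorizes (fun j => (1 - x j) / ((n : ℝ) - 1))
      (fun j => φ (x j) / ∑ i, φ (x i)) ∧
    Majorizes x (fun j => φ (x j) / ∑ i, φ (x i)) :=
  stmt_16_general n hn x hpos hsum hsort φ hφone hφmono hφquot hZ
end

section
/- Let n > 2 and let x be a real probability vector. Its Yager negation y_j = (1−x_j)/(n−1) satisfies y_j − 1/n = −(x_j − 1/n)/(n−1) for every j; hence ∑_j (y_j − 1/n)² = (n−1)^{-2} ∑_j (x_j − 1/n)². Consequently, for any negator N whose output is majorized by the Yager negation at every step, the m-th iterate P_m satisfies ∑_j (p_{m,j} − 1/n)² ≤ (n−1)^{-2m} ∑_j (p_j − 1/n)², and p_{m,j} → 1/n as m → ∞. -/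
open Finset Filter Topology

section AntitoneSums

variable {a b : ℕ → ℝ} {n : ℕ}

theorem sum_le_sum_range_card_of_antitoneOn (hb : AntitoneOn b (Set.Iio n)) {A : Finset ℕ}
    (hA : A ⊆ range n) : ∑ i ∈ A, b i ≤ ∑ i ∈ range #A, b i := by
  induction A using Finset.induction_on_max with
  | empty => simp
  | insert m s hlt ih =>
    have hm : m < n := mem_range.1 (hA (mem_insert_self m s))
    have hms : m ∉ s := fun h => lt_irrefl m (hlt m h)
    have hcard : #s ≤ m := by simpa using card_le_card fun x hx => mem_range.2 (hlt x hx)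
    rw [sum_insert hms, card_insert_of_notMem hms, sum_range_succ]
    linarith [ih ((subset_insert m s).trans hA),
      hb (Set.mem_Iio.2 (hcard.trans_lt hm)) (Set.mem_Iio.2 hm) hcard]

theorem sum_mul_nonneg_of_antitoneOn {d : ℕ → ℝ} (hb : AntitoneOn b (Set.Iio n))
    (hd : ∀ k ≤ n, 0 ≤ ∑ i ∈ range k, d i) (hdn : ∑ i ∈ range n, d i = 0) :
    0 ≤ ∑ i ∈ range n, b i * d i := by
  have abel := sum_range_by_parts b d n
  simp only [smul_eq_mul] at abel
  rw [abel, hdn, mul_zero, zero_sub, neg_nonneg]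
  refine sum_nonpos fun i hi => mul_nonpos_of_nonpos_of_nonneg ?_ (hd _ ?_)
  · have hi : i + 1 < n := by rw [mem_range] at hi; omega
    exact sub_nonpos.2 (hb (Set.mem_Iio.2 (by omega)) (Set.mem_Iio.2 hi) (Nat.le_succ i))
  · rw [mem_range] at hi; omega

theorem sum_sq_le_of_sum_range_le (hb : AntitoneOn b (Set.Iio n))
    (hab : ∀ k ≤ n, ∑ i ∈ range k, b i ≤ ∑ i ∈ range k, a i)
    (htot : ∑ i ∈ range n, a i = ∑ i ∈ range n, b i) :
    ∑ i ∈ range n, b i ^ 2 ≤ ∑ i ∈ range n, a i ^ 2 := by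
  have hcross : 0 ≤ ∑ i ∈ range n, b i * (a i - b i) :=
    sum_mul_nonneg_of_antitoneOn hb (fun k hk => by rw [sum_sub_distrib]; linarith [hab k hk])
      (by rw [sum_sub_distrib, htot, sub_self])
  have expand : ∑ i ∈ range n, a i ^ 2 = ∑ i ∈ range n, b i ^ 2
      + 2 * ∑ i ∈ range n, b i * (a i - b i) + ∑ i ∈ range n, (a i - b i) ^ 2 := by
    rw [mul_sum, ← sum_add_distrib, ← sum_add_distrib]
    exact sum_congr rfl fun i _ => by ring
  linarith [sum_nonneg fun i (_ : i ∈ range n) => sq_nonneg (a i - b i)]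

end AntitoneSums

section SortDesc

variable {n : ℕ} (x : Fin n → ℝ)

noncomputable def antitoneSort : Equiv.Perm (Fin n) := Fin.revPerm.trans (Tuple.sort x)

theorem antitone_comp_antitoneSort : Antitone (x ∘ antitoneSort x) :=
  fun _ _ hij => Tuple.monotone_sort x (Fin.rev_le_rev.2 hij)

noncomputable def sortDesc (m : ℕ) : ℝ :=
  if h : m < n then x (antitoneSort x ⟨m, h⟩) else 0

theorem antitoneOn_sortDesc : AntitoneOn (sortDesc x) (Set.Iio n) := fun i hi j hj hij => by
  simp only [sortDesc, dif_pos (Set.mem_Iio.1 hi), dif_pos (Set.mem_Iio.1 hj)]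
  exact antitone_comp_antitoneSort x (Fin.mk_le_mk.2 hij)

theorem sum_image_val_sortDesc (B : Finset (Fin n)) :
    ∑ m ∈ B.image Fin.val, sortDesc x m = ∑ i ∈ B, x (antitoneSort x i) := by
  rw [sum_image fun _ _ _ _ h => Fin.ext h]
  exact sum_congr rfl fun i _ => by simp [sortDesc]

theorem sum_range_sortDesc (f : ℝ → ℝ) : ∑ m ∈ range n, f (sortDesc x m) = ∑ i, f (x i) := by
  rw [← Fin.sum_univ_eq_sum_range (fun m => f (sortDesc x m))]
  simp only [sortDesc, Fin.is_lt, dif_pos, Fin.eta]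
  exact Equiv.sum_comp (antitoneSort x) (f ∘ x)

theorem topSum_eq_sum_range_sortDesc {k : ℕ} (hk : k ≤ n) :
    topSum x k = ∑ m ∈ range k, sortDesc x m := by
  have hlt : ∀ m ∈ range k, m < n := fun m hm => (mem_range.1 hm).trans_le hk
  set B := (range k).attachFin hlt
  have hB : #(B.map (antitoneSort x).toEmbedding) = k := by simp [B]
  have hsumB : ∑ i ∈ B.map (antitoneSort x).toEmbedding, x i = ∑ m ∈ range k, sortDesc x m := by
    rw [sum_map, ← image_val_attachFin hlt, sum_image_val_sortDesc]; rfl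
  refine le_antisymm (csSup_le ⟨_, B.map _, hB, rfl⟩ ?_)
    (le_csSup (Set.toFinite _).bddAbove ⟨_, hB, hsumB⟩)
  rintro _ ⟨A, hA, rfl⟩
  set A' := (A.map (antitoneSort x).symm.toEmbedding).image Fin.val
  have hA' : #A' = k := by
    rw [card_image_of_injective _ Fin.val_injective, card_map, hA]
  calc ∑ i ∈ A, x i = ∑ m ∈ A', sortDesc x m := by
        rw [sum_image_val_sortDesc, sum_map]; simp
    _ ≤ ∑ m ∈ range #A', sortDesc x m :=
        sum_le_sum_range_card_of_antitoneOn (antitoneOn_sortDesc x)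
          fun m hm => by obtain ⟨i, -, rfl⟩ := mem_image.1 hm; exact mem_range.2 i.is_lt
    _ = ∑ m ∈ range k, sortDesc x m := by rw [hA']

end SortDesc

namespace Majorizes

variable {n : ℕ} {x y : Fin n → ℝ}

theorem sum_sq_le_s18 (h : Majorizes x y) : ∑ i, y i ^ 2 ≤ ∑ i, x i ^ 2 := by
  have key := sum_sq_le_of_sum_range_le (a := sortDesc x) (antitoneOn_sortDesc y)
    (fun k hk => by
      rw [← topSum_eq_sum_range_sortDesc x hk, ← topSum_eq_sum_range_sortDesc y hk]
      exact h.1 k)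
    ((sum_range_sortDesc x id).trans (h.2.trans (sum_range_sortDesc y id).symm))
  rwa [sum_range_sortDesc y (· ^ 2), sum_range_sortDesc x (· ^ 2)] at key

theorem sum_sub_sq_le (h : Majorizes x y) (c : ℝ) :
    ∑ i, (y i - c) ^ 2 ≤ ∑ i, (x i - c) ^ 2 := by
  have expand : ∀ z : Fin n → ℝ,
      ∑ i, (z i - c) ^ 2 = ∑ i, z i ^ 2 - 2 * c * ∑ i, z i + n * c ^ 2 := by
    intro z
    rw [← sum_congr rfl fun i _ => (by ring : z i ^ 2 - 2 * c * z i + c ^ 2 = (z i - c) ^ 2),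
      sum_add_distrib, sum_sub_distrib, ← mul_sum, sum_const, card_univ, Fintype.card_fin,
      nsmul_eq_mul]
  rw [expand, expand, h.2]
  linarith [h.sum_sq_le_s18]

end Majorizes

theorem Function.iterate_le_pow_mul_of_mapsTo {α : Type*} {S : Set α} {f : α → α} {Q : α → ℝ}
    {r : ℝ} (hr : 0 ≤ r) (hf : Set.MapsTo f S S) (hQ : ∀ y ∈ S, Q (f y) ≤ r * Q y) {x : α}
    (hx : x ∈ S) : ∀ m : ℕ, Q (f^[m] x) ≤ r ^ m * Q x
  | 0 => by simp
  | m + 1 => calc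
      Q (f^[m + 1] x) ≤ r * Q (f^[m] x) := by
        rw [Function.iterate_succ_apply']; exact hQ _ (hf.iterate m hx)
      _ ≤ r * (r ^ m * Q x) :=
        mul_le_mul_of_nonneg_left (Function.iterate_le_pow_mul_of_mapsTo hr hf hQ hx m) hr
      _ = r ^ (m + 1) * Q x := by ring

section Yager

variable {n : ℕ}

noncomputable def yagerNeg (x : Fin n → ℝ) : Fin n → ℝ := fun j => (1 - x j) / ((n : ℝ) - 1)

noncomputable def quadDev (x : Fin n → ℝ) : ℝ := ∑ j, (x j - 1 / n) ^ 2

theorem yagerNeg_sub_inv (hn : 1 < n) (x : Fin n → ℝ) (j : Fin n) :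
    yagerNeg x j - 1 / n = -(x j - 1 / n) / ((n : ℝ) - 1) := by
  have hn' : (1 : ℝ) < n := by exact_mod_cast hn
  have : (n : ℝ) - 1 ≠ 0 := by linarith
  unfold yagerNeg
  field_simp
  ring

theorem quadDev_yagerNeg (hn : 1 < n) (x : Fin n → ℝ) :
    quadDev (yagerNeg x) = (((n : ℝ) - 1) ^ 2)⁻¹ * quadDev x := by
  rw [quadDev, quadDev, mul_sum]
  refine sum_congr rfl fun j _ => ?_
  rw [yagerNeg_sub_inv hn, neg_div, neg_sq, div_pow, div_eq_inv_mul]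

theorem Majorizes.quadDev_le {x y : Fin n → ℝ} (h : Majorizes x y) : quadDev y ≤ quadDev x :=
  h.sum_sub_sq_le _

theorem quadDev_le_of_majorizes_yagerNeg (hn : 1 < n) {x y : Fin n → ℝ}
    (h : Majorizes (yagerNeg x) y) : quadDev y ≤ (((n : ℝ) - 1) ^ 2)⁻¹ * quadDev x :=
  quadDev_yagerNeg hn x ▸ h.quadDev_le

theorem tendsto_of_quadDev_le_pow_mul {v : ℕ → Fin n → ℝ} {r C : ℝ} (hr0 : 0 ≤ r) (hr1 : r < 1)
    (h : ∀ m, quadDev (v m) ≤ r ^ m * C) (j : Fin n) :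
    Tendsto (fun m => v m j) atTop (𝓝 (1 / n)) := by
  rw [tendsto_iff_dist_tendsto_zero]
  have hlim : Tendsto (fun m => √(r ^ m * C)) atTop (𝓝 0) := by
    simpa using ((tendsto_pow_atTop_nhds_zero_of_lt_one hr0 hr1).mul_const C).sqrt
  refine squeeze_zero (fun _ => dist_nonneg) (fun m => ?_) hlim
  rw [Real.dist_eq, ← Real.sqrt_sq_eq_abs]
  exact Real.sqrt_le_sqrt <|
    (single_le_sum (f := fun i => (v m i - 1 / n) ^ 2) (fun i _ => sq_nonneg _) (mem_univ j)).trans (h m)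

end Yager

theorem stmt_18 (n : ℕ) (hn : 2 < n) (x : Fin n → ℝ)
    (hpos : ∀ i, 0 ≤ x i) (hsum : ∑ i, x i = 1) :
    (∀ j, (1 - x j) / ((n : ℝ) - 1) - 1 / n = -(x j - 1 / n) / ((n : ℝ) - 1)) ∧
    (∑ j, ((1 - x j) / ((n : ℝ) - 1) - 1 / n) ^ 2
      = (((n : ℝ) - 1) ^ 2)⁻¹ * ∑ j, (x j - 1 / n) ^ 2) ∧
    (∀ N : (Fin n → ℝ) → (Fin n → ℝ),
      (∀ y : Fin n → ℝ, (∀ i, 0 ≤ y i) → ∑ i, y i = 1 →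
        (∀ i, 0 ≤ N y i) ∧ ∑ i, N y i = 1 ∧
        Majorizes (fun j => (1 - y j) / ((n : ℝ) - 1)) (N y)) →
      (∀ m : ℕ, ∑ j, (N^[m] x j - 1 / n) ^ 2
        ≤ (((n : ℝ) - 1) ^ (2 * m))⁻¹ * ∑ j, (x j - 1 / n) ^ 2) ∧
      (∀ j, Filter.Tendsto (fun m => N^[m] x j) Filter.atTop (nhds (1 / n)))) := by
  have hn1 : 1 < n := by omega
  have hr1 : (((n : ℝ) - 1) ^ 2)⁻¹ < 1 := by
    have : (2 : ℝ) < n := by exact_mod_cast hn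
    exact inv_lt_one_of_one_lt₀ (by nlinarith)
  refine ⟨yagerNeg_sub_inv hn1 x, quadDev_yagerNeg hn1 x, fun N hN => ?_⟩
  have hmaps : Set.MapsTo N (stdSimplex ℝ (Fin n)) (stdSimplex ℝ (Fin n)) :=
    fun y hy => ⟨(hN y hy.1 hy.2).1, (hN y hy.1 hy.2).2.1⟩
  have hbound := Function.iterate_le_pow_mul_of_mapsTo (by positivity) hmaps
    (fun y hy => quadDev_le_of_majorizes_yagerNeg hn1 (hN y hy.1 hy.2).2.2)
    (show x ∈ stdSimplex ℝ (Fin n) from ⟨hpos, hsum⟩)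
  refine ⟨fun m => ?_, tendsto_of_quadDev_le_pow_mul (by positivity) hr1 hbound⟩
  rw [pow_mul, ← inv_pow]
  exact hbound m
end

section
/- Let n > 2 and let Φ be an admissible hyperbolic generator with Φ(1) = 0 and Φ(1/(n−1)) ≠ 0. Then the generated hyperbolic negator N_Φ is not involutive: for the vertex distribution V = (1,0,…,0) one has N_Φ(V) = (0, 1/(n−1), …, 1/(n−1)) and N_Φ²(V) ≠ V. In particular the Yager hyperbolic negator is not involutive for n > 2. -/
/-- The hyperbolic order: componentwise comparison of idempotent components. -/
def hle (z w : HypD) : Prop := z.1 ≤ w.1 ∧ z.2 ≤ w.2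

/-- The hyperbolic unit square `[0,1]_𝔻`. -/
def unitSq (z : HypD) : Prop := 0 ≤ z.1 ∧ z.1 ≤ 1 ∧ 0 ≤ z.2 ∧ z.2 ≤ 1

/-- The generated negator on hyperbolic distributions of total mass `1`
(both idempotent components active): normalize `Φ` entrywise in each component. -/
noncomputable def genNeg {n : ℕ} (Φ : HypD → HypD) (P : Fin n → HypD) :
    Fin n → HypD :=
  fun j => ((Φ (P j)).1 / ∑ i, (Φ (P i)).1, (Φ (P j)).2 / ∑ i, (Φ (P i)).2)

/-!
Since `Φ (1, 1) = 0`, normalizing `Φ ∘ V` sends the vertex `V` to the uniform distribution on the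
other `n - 1` coordinates. Normalization vanishes exactly where `Φ` does, so `N_Φ² V` vanishes at a
coordinate `j ≠ 0` only if `Φ (1/(n-1), 1/(n-1)) = 0`; but `V` vanishes there.
-/

theorem Fintype.sum_ite_eq_add_card_sub_one_mul {ι : Type*} [Fintype ι] [DecidableEq ι]
    (i₀ : ι) (a b : ℝ) :
    ∑ i, (if i = i₀ then a else b) = a + ((Fintype.card ι : ℝ) - 1) * b := by
  rw [← Finset.add_sum_erase _ _ (Finset.mem_univ i₀), if_pos rfl,
    Finset.sum_congr rfl fun i hi => if_neg (Finset.ne_of_mem_erase hi), Finset.sum_const,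
    Finset.card_erase_of_mem (Finset.mem_univ i₀), nsmul_eq_mul, Finset.card_univ,
    Nat.cast_pred (Fintype.card_pos_iff.mpr ⟨i₀⟩)]

theorem unitSq_mk_self {a : ℝ} (h₀ : 0 ≤ a) (h₁ : a ≤ 1) : unitSq (a, a) :=
  ⟨h₀, h₁, h₀, h₁⟩

section genNeg

variable {n : ℕ} {Φ : HypD → HypD} {P : Fin n → HypD}

theorem sum_genNeg_fst (h : ∑ i, (Φ (P i)).1 ≠ 0) : ∑ j, (genNeg Φ P j).1 = 1 := by
  simp only [genNeg, ← Finset.sum_div]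
  exact div_self h

theorem sum_genNeg_snd (h : ∑ i, (Φ (P i)).2 ≠ 0) : ∑ j, (genNeg Φ P j).2 = 1 := by
  simp only [genNeg, ← Finset.sum_div]
  exact div_self h

theorem genNeg_apply_eq_zero_iff (h₁ : ∑ i, (Φ (P i)).1 ≠ 0) (h₂ : ∑ i, (Φ (P i)).2 ≠ 0)
    (j : Fin n) : genNeg Φ P j = 0 ↔ Φ (P j) = 0 := by
  simp [genNeg, Prod.ext_iff, h₁, h₂]

theorem genNeg_eq_ite_of_apply_eq_ite (i₀ : Fin n) {c : HypD}
    (hP : ∀ j, Φ (P j) = if j = i₀ then 0 else c)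
    (h₁ : ∑ i, (Φ (P i)).1 ≠ 0) (h₂ : ∑ i, (Φ (P i)).2 ≠ 0) :
    genNeg Φ P = fun j => if j = i₀ then 0 else (((n : ℝ) - 1)⁻¹, ((n : ℝ) - 1)⁻¹) := by
  have hS₁ : ∑ i, (Φ (P i)).1 = ((n : ℝ) - 1) * c.1 := by
    simp [hP, apply_ite Prod.fst, Fintype.sum_ite_eq_add_card_sub_one_mul]
  have hS₂ : ∑ i, (Φ (P i)).2 = ((n : ℝ) - 1) * c.2 := by
    simp [hP, apply_ite Prod.snd, Fintype.sum_ite_eq_add_card_sub_one_mul]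
  rw [hS₁] at h₁
  rw [hS₂] at h₂
  funext j
  by_cases hj : j = i₀
  · simp [genNeg, hP, hj]
  · rw [genNeg, hS₁, hS₂, hP, if_neg hj, if_neg hj,
      div_mul_cancel_right₀ (right_ne_zero_of_mul h₁),
      div_mul_cancel_right₀ (right_ne_zero_of_mul h₂)]

end genNeg

theorem stmt_19 (n : ℕ) (hn : 2 < n) (Φ : HypD → HypD)
    (hadm : ∀ P : Fin n → HypD, (∀ j, unitSq (P j)) →
      ∑ j, (P j).1 = 1 → ∑ j, (P j).2 = 1 →
      0 < ∑ j, (Φ (P j)).1 ∧ 0 < ∑ j, (Φ (P j)).2)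
    (hΦ1 : Φ (1, 1) = 0)
    (hΦq : Φ (((n : ℝ) - 1)⁻¹, ((n : ℝ) - 1)⁻¹) ≠ 0)
    (V : Fin n → HypD)
    (hV : V = fun j => if j = (⟨0, by omega⟩ : Fin n) then ((1 : ℝ), (1 : ℝ)) else (0, 0)) :
    genNeg Φ V = (fun j => if j = (⟨0, by omega⟩ : Fin n) then (0, 0) else
      (((n : ℝ) - 1)⁻¹, ((n : ℝ) - 1)⁻¹)) ∧
    genNeg Φ (genNeg Φ V) ≠ V := by
  set i₀ : Fin n := ⟨0, by omega⟩
  set q : ℝ := ((n : ℝ) - 1)⁻¹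
  have hn' : (2 : ℝ) < n := by exact_mod_cast hn
  have hq₀ : 0 < q := inv_pos.mpr (by linarith)
  have hq₁ : q ≤ 1 := inv_le_one_of_one_le₀ (by linarith)
  obtain ⟨hV₁, hV₂⟩ := hadm V
    (fun j => by rw [hV]; dsimp only; split_ifs <;> exact unitSq_mk_self (by norm_num) (by norm_num))
    (by simp [hV, apply_ite Prod.fst])
    (by simp [hV, apply_ite Prod.snd])
  have hW : genNeg Φ V = fun j => if j = i₀ then 0 else (q, q) :=
    genNeg_eq_ite_of_apply_eq_ite i₀ (c := Φ (0, 0))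
      (fun j => by rw [hV]; dsimp only; split_ifs <;> simp [hΦ1]) hV₁.ne' hV₂.ne'
  refine ⟨hW, fun hWV => hΦq ?_⟩
  obtain ⟨hW₁, hW₂⟩ := hadm (genNeg Φ V)
    (fun j => by
      rw [hW]; dsimp only
      split_ifs
      exacts [unitSq_mk_self le_rfl zero_le_one, unitSq_mk_self hq₀.le hq₁])
    (sum_genNeg_fst hV₁.ne') (sum_genNeg_snd hV₂.ne')
  set j₁ : Fin n := ⟨1, by omega⟩
  have hj₁ : j₁ ≠ i₀ := by simp [j₁, i₀, Fin.ext_iff]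
  have hΦW : Φ (genNeg Φ V j₁) = 0 :=
    (genNeg_apply_eq_zero_iff hW₁.ne' hW₂.ne' j₁).mp (by rw [hWV, hV]; simp [hj₁])
  simpa [hW, hj₁] using hΦW
end
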